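/- Let n ≥ 1 and let A and B be positive semidefinite n×n complex matrices. Then Tr(A^{1/2} B^{1/2}) ≤ Tr((B^{1/2} A B^{1/2})^{1/2}). -/

import Mathlib

open ComplexOrder

open scoped MatrixOrder in
/-- `|A| = (AᴴA)^{1/2}`, the absolute value of a complex matrix. -/
noncomputable def matAbs {n : ℕ} (A : Matrix (Fin n) (Fin n) ℂ) :
    Matrix (Fin n) (Fin n) ℂ :=
  CFC.sqrt (Matrix.conjTranspose A * A)

/-- The real power `A^p` of a matrix, defined via the continuous functional calculus
(meaningful when `A` is Hermitian/positive semidefinite). -/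
noncomputable def mpow {n : ℕ} (A : Matrix (Fin n) (Fin n) ℂ) (p : ℝ) :
    Matrix (Fin n) (Fin n) ℂ :=
  cfc (fun x : ℝ => x ^ p) A

open scoped MatrixOrder in
/-- The singular values `σ₁(A) ≥ σ₂(A) ≥ … ≥ σₙ(A)` of `A`, i.e. the eigenvalues of `|A|`
arranged in decreasing order. -/
noncomputable def singVals {n : ℕ} (A : Matrix (Fin n) (Fin n) ℂ) : Fin n → ℝ :=
  fun k =>
    ((Matrix.LE.le.posSemidef (CFC.sqrt_nonneg (Matrix.conjTranspose A * A))).1.eigenvalues ∘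
      Tuple.sort (Matrix.LE.le.posSemidef (CFC.sqrt_nonneg (Matrix.conjTranspose A * A))).1.eigenvalues) k.rev

/-- `Σ↑(A)`: the diagonal matrix with diagonal entries `σ₁(A), …, σₙ(A)` in that order. -/
noncomputable def SigmaUp {n : ℕ} (A : Matrix (Fin n) (Fin n) ℂ) :
    Matrix (Fin n) (Fin n) ℂ :=
  Matrix.diagonal fun k => (singVals A k : ℂ)

/-- `Σ↓(A)`: the diagonal matrix with diagonal entries `σₙ(A), …, σ₁(A)` in that order. -/
noncomputable def SigmaDown {n : ℕ} (A : Matrix (Fin n) (Fin n) ℂ) :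
    Matrix (Fin n) (Fin n) ℂ :=
  Matrix.diagonal fun k => (singVals A k.rev : ℂ)

/-- `‖A‖_p^p = Tr(|A|^p)`, the `p`-th power of the Schatten `p`-norm. -/
noncomputable def schattenPow {n : ℕ} (p : ℝ) (A : Matrix (Fin n) (Fin n) ℂ) : ℝ :=
  (Matrix.trace (mpow (matAbs A) p)).re

/-! With `X = A^{1/2} B^{1/2}` we have `Xᴴ X = B^{1/2} A B^{1/2}`, so the claim is
`Re Tr X ≤ Tr |X|`. Compute the trace of `X` in an orthonormal eigenbasis `(eᵢ)` of `|X|`: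
by Cauchy–Schwarz `Re ⟪eᵢ, X eᵢ⟫ ≤ ‖X eᵢ‖`, and `‖X eᵢ‖ = ‖|X| eᵢ‖` is the `i`-th eigenvalue
of `|X|` because `Xᴴ X = |X|ᴴ |X|`. -/

namespace Matrix

variable {𝕜 n : Type*} [RCLike 𝕜] [Fintype n] [DecidableEq n]
open scoped InnerProductSpace MatrixOrder

lemma trace_eq_sum_inner_toEuclideanLin (C : Matrix n n 𝕜)
    (b : OrthonormalBasis n 𝕜 (EuclideanSpace 𝕜 n)) :
    C.trace = ∑ i, ⟪b i, C.toEuclideanLin (b i)⟫_𝕜 := by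
  rw [← LinearMap.trace_eq_sum_inner, toEuclideanLin_eq_toLin_orthonormal, trace_toLin_eq]

lemma norm_toEuclideanLin_eq_of_conjTranspose_mul_self_eq {C S : Matrix n n 𝕜}
    (h : Cᴴ * C = Sᴴ * S) (x : EuclideanSpace 𝕜 n) :
    ‖C.toEuclideanLin x‖ = ‖S.toEuclideanLin x‖ := by
  have norm_sq_eq : ∀ M : Matrix n n 𝕜,
      ‖M.toEuclideanLin x‖ ^ 2 = RCLike.re ⟪x, (Mᴴ * M).toEuclideanLin x⟫_𝕜 := by
    intro M
    rw [toLpLin_mul_same, LinearMap.comp_apply, toEuclideanLin_conjTranspose_eq_adjoint,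
      LinearMap.adjoint_inner_right, inner_self_eq_norm_sq]
  rw [← pow_left_inj₀ (norm_nonneg _) (norm_nonneg _) two_ne_zero, norm_sq_eq, norm_sq_eq, h]

lemma IsHermitian.toEuclideanLin_eigenvectorBasis {S : Matrix n n 𝕜} (hS : S.IsHermitian)
    (i : n) :
    S.toEuclideanLin (hS.eigenvectorBasis i) = hS.eigenvalues i • hS.eigenvectorBasis i := by
  rw [toLpLin_apply, hS.mulVec_eigenvectorBasis]
  rfl

lemma PosSemidef.norm_toEuclideanLin_eigenvectorBasis {S : Matrix n n 𝕜} (hS : S.PosSemidef)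
    (i : n) : ‖S.toEuclideanLin (hS.1.eigenvectorBasis i)‖ = hS.1.eigenvalues i := by
  rw [hS.1.toEuclideanLin_eigenvectorBasis, norm_smul, hS.1.eigenvectorBasis.orthonormal.1 i,
    mul_one, Real.norm_of_nonneg (hS.eigenvalues_nonneg i)]

lemma re_trace_le_re_trace_of_conjTranspose_mul_self_eq {C S : Matrix n n 𝕜}
    (hS : S.PosSemidef) (h : Cᴴ * C = Sᴴ * S) : RCLike.re C.trace ≤ RCLike.re S.trace := by
  set b := hS.1.eigenvectorBasis
  calc RCLike.re C.trace = ∑ i, RCLike.re ⟪b i, C.toEuclideanLin (b i)⟫_𝕜 := by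
        rw [trace_eq_sum_inner_toEuclideanLin C b, map_sum]
    _ ≤ ∑ i, ‖b i‖ * ‖C.toEuclideanLin (b i)‖ := by
        gcongr with i
        exact re_inner_le_norm _ _
    _ = ∑ i, hS.1.eigenvalues i := by
        simp_rw [b.orthonormal.1, one_mul, norm_toEuclideanLin_eq_of_conjTranspose_mul_self_eq h,
          b, hS.norm_toEuclideanLin_eigenvectorBasis]
    _ = RCLike.re S.trace := by
        rw [hS.1.trace_eq_sum_eigenvalues, map_sum]
        simp only [RCLike.ofReal_re]

lemma re_trace_le_re_trace_sqrt_conjTranspose_mul_self (C : Matrix n n 𝕜) :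
    RCLike.re C.trace ≤ RCLike.re (CFC.sqrt (Cᴴ * C)).trace := by
  have hS : (CFC.sqrt (Cᴴ * C)).PosSemidef := nonneg_iff_posSemidef.mp (CFC.sqrt_nonneg _)
  refine re_trace_le_re_trace_of_conjTranspose_mul_self_eq hS ?_
  rw [hS.1.eq, CFC.sqrt_mul_sqrt_self _ (posSemidef_conjTranspose_mul_self C).nonneg]

end Matrix

open Matrix

lemma mpow_isHermitian {n : ℕ} (A : Matrix (Fin n) (Fin n) ℂ) (p : ℝ) :
    (mpow A p).IsHermitian :=
  cfc_predicate _ A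

section

open scoped MatrixOrder

variable {n : ℕ}

lemma mpow_half_eq_sqrt {A : Matrix (Fin n) (Fin n) ℂ} (hA : A.PosSemidef) :
    mpow A (1 / 2) = CFC.sqrt A := by
  rw [CFC.sqrt_eq_rpow, CFC.rpow_eq_cfc_real hA.nonneg, mpow]

lemma mpow_half_mul_self {A : Matrix (Fin n) (Fin n) ℂ} (hA : A.PosSemidef) :
    mpow A (1 / 2) * mpow A (1 / 2) = A := by
  rw [mpow_half_eq_sqrt hA, CFC.sqrt_mul_sqrt_self A hA.nonneg]

end

theorem trace_sqrt_mul_sqrt_le_general (n : ℕ)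
    (A B : Matrix (Fin n) (Fin n) ℂ) (hA : A.PosSemidef) :
    (Matrix.trace (mpow A (1 / 2) * mpow B (1 / 2))).re ≤
      (Matrix.trace (mpow (mpow B (1 / 2) * A * mpow B (1 / 2)) (1 / 2))).re := by
  set X := mpow A (1 / 2) * mpow B (1 / 2)
  have hX : Xᴴ * X = mpow B (1 / 2) * A * mpow B (1 / 2) := by
    rw [conjTranspose_mul, (mpow_isHermitian A _).eq, (mpow_isHermitian B _).eq, mul_assoc,
      ← mul_assoc (mpow A _), mpow_half_mul_self hA, mul_assoc]
  rw [← hX, mpow_half_eq_sqrt (posSemidef_conjTranspose_mul_self X)]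
  exact re_trace_le_re_trace_sqrt_conjTranspose_mul_self X

/-- For positive semidefinite `A`, `B`, `Tr(A^{1/2} B^{1/2}) ≤ Tr((B^{1/2} A B^{1/2})^{1/2})`. -/
theorem trace_sqrt_mul_sqrt_le (n : ℕ) (hn : 1 ≤ n)
    (A B : Matrix (Fin n) (Fin n) ℂ) (hA : A.PosSemidef) (hB : B.PosSemidef) :
    (Matrix.trace (mpow A (1 / 2) * mpow B (1 / 2))).re ≤
      (Matrix.trace (mpow (mpow B (1 / 2) * A * mpow B (1 / 2)) (1 / 2))).re :=
  trace_sqrt_mul_sqrt_le_general n A B hA
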